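/- Let 𝕂 be an algebraically closed field and n ≥ 1. Let g be a 𝕂-algebra automorphism of 𝕂[x₁,…,xₙ] with g(𝔪) ⊆ 𝔪 where 𝔪 = (x₁,…,xₙ), and let g' ∈ GL_n(𝕂) act linearly on 𝕂[y₁,…,yₙ]. Suppose there is a 𝕂-algebra isomorphism φ : 𝕂[[x₁,…,xₙ]] → 𝕂[[y₁,…,yₙ]] of the completed rings intertwining the induced actions, i.e., φ ∘ ĝ = ĝ' ∘ φ, where ĝ and ĝ' denote the induced automorphisms of the formal power series rings. If there exists an irreducible polynomial α ∈ 𝔪 such that g·f − f ∈ (α) for every f ∈ 𝕂[x₁,…,xₙ], then g' is a pseudoreflection or the identity, i.e., dim ker(g' − E) ≥ n − 1. -/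

import Mathlib

open MvPolynomial Matrix

/-- The action of `g ∈ GL_n(K)` on polynomials: `(g • f)(x) = f (g⁻¹ • x)`. -/
noncomputable def polyAct {K : Type*} [Field K] {n : ℕ} (g : GL (Fin n) K) :
    MvPolynomial (Fin n) K →ₐ[K] MvPolynomial (Fin n) K :=
  aeval fun i => ∑ j, ((g⁻¹ : GL (Fin n) K) : Matrix (Fin n) (Fin n) K) i j • X j

noncomputable def fixedDim {K : Type*} [Field K] {n : ℕ} (g : Matrix (Fin n) (Fin n) K) : ℕ :=
  Module.finrank K (LinearMap.ker (Matrix.toLin' (g - 1)))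

/-!
Principal ideals of the Noetherian local ring `K[[x]]` are closed in the `𝔪`-adic topology
(Krull's intersection theorem) and polynomials are `𝔪`-adically dense, so `ĝ H - H ∈ (α)` for
every power series `H`. Transporting along `φ` gives `ĝ' yᵢ - yᵢ ∈ (β)` for `β = φ α ∈ 𝔪`, and
comparing linear coefficients shows that `g'⁻¹ - E = c bᵀ`, where `b` is the linear part of `β`.
So `g'⁻¹ - E`, and with it `g' - E`, has rank at most one.
-/

theorem Ideal.mem_of_forall_mem_sup_pow {A : Type*} [CommRing A] [IsNoetherianRing A]
    [IsLocalRing A] {I J : Ideal A} (hJ : J ≠ ⊤) {x : A} (hx : ∀ k : ℕ, x ∈ I ⊔ J ^ k) :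
    x ∈ I := by
  -- Krull's intersection theorem for the finite `A`-module `A ⧸ I`
  have hHaus : IsHausdorff J (A ⧸ I) := IsHausdorff.of_isLocalRing J _ hJ
  rw [← Ideal.Quotient.eq_zero_iff_mem]
  refine hHaus.haus _ fun k => ?_
  obtain ⟨i, hi, j, hj, rfl⟩ := Submodule.mem_sup.mp (hx k)
  rw [SModEq.sub_mem, sub_zero, map_add, Ideal.Quotient.eq_zero_iff_mem.mpr hi, zero_add]
  simpa [Algebra.smul_def] using
    Submodule.smul_mem_smul hj (Submodule.mem_top (x := (1 : A ⧸ I)))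

namespace MvPowerSeries

variable {σ R : Type*} [CommRing R]

variable (σ R) in
noncomputable abbrev idealOfVars : Ideal (MvPowerSeries σ R) := .span (.range X)

theorem idealOfVars_le_ker_constantCoeff :
    idealOfVars σ R ≤ RingHom.ker (constantCoeff (σ := σ) (R := R)) :=
  Ideal.span_le.mpr (by rintro _ ⟨i, rfl⟩; simp)

theorem idealOfVars_ne_top [Nontrivial R] : idealOfVars σ R ≠ ⊤ := fun h => by
  simpa using
    idealOfVars_le_ker_constantCoeff (h ▸ Submodule.mem_top : (1 : MvPowerSeries σ R) ∈ _)

theorem monomial_one_mem_pow_idealOfVars (c : σ →₀ ℕ) :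
    monomial c (1 : R) ∈ idealOfVars σ R ^ c.degree := by
  rw [monomial_one_eq, Finsupp.degree_apply, ← Finset.prod_pow_eq_pow_sum]
  exact Ideal.prod_mem_prod fun i _ =>
    Ideal.pow_mem_pow (Ideal.subset_span (Set.mem_range_self i)) _

theorem mem_pow_idealOfVars_of_le_order [Finite σ] {k : ℕ} {F : MvPowerSeries σ R}
    (hF : (k : ℕ∞) ≤ F.order) : F ∈ idealOfVars σ R ^ k := by
  classical
  -- assign to each exponent `d` of degree `≥ k` a divisor `e d` of degree `k`;
  -- `G c` collects the terms of `F` whose exponent is assigned to `c`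
  have hchoice : ∀ d : σ →₀ ℕ, ∃ e ≤ d, k ≤ d.degree → e.degree = k := fun d => by
    by_cases hd : k ≤ d.degree
    · obtain ⟨e, hed, he⟩ := Finsupp.exists_le_degree_eq d k hd
      exact ⟨e, hed, fun _ => he⟩
    · exact ⟨0, zero_le, fun h => absurd h hd⟩
  choose e he_le he_deg using hchoice
  let S : Finset (σ →₀ ℕ) :=
    (Finsupp.finite_of_degree_le (σ := σ) k).toFinset.filter (·.degree = k)
  let G (c : σ →₀ ℕ) : MvPowerSeries σ R := fun d =>
    if e (c + d) = c then coeff (c + d) F else 0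
  have hdecomp : F = ∑ c ∈ S, monomial c 1 * G c := by
    ext d
    have hterm : ∀ c ∈ S, coeff d (monomial c 1 * G c) = if e d = c then coeff d F else 0 := by
      intro c _
      rw [coeff_monomial_mul, one_mul]
      by_cases hcd : c ≤ d
      · rw [if_pos hcd]
        show (if e (c + (d - c)) = c then _ else _) = _
        rw [add_tsub_cancel_of_le hcd]
      · rw [if_neg hcd, if_neg fun hed : e d = c => hcd (hed ▸ he_le d)]
    rw [map_sum, Finset.sum_congr rfl hterm, Finset.sum_ite_eq]
    split_ifs with hmem
    · rfl
    · refine coeff_of_lt_order (lt_of_lt_of_le ?_ hF)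
      by_contra! hkd
      exact hmem (by simp [S, he_deg d (by exact_mod_cast hkd)])
  rw [hdecomp]
  refine Ideal.sum_mem _ fun c hc => Ideal.mul_mem_right _ _ ?_
  rw [← (Finset.mem_filter.mp hc).2]
  exact monomial_one_mem_pow_idealOfVars c

theorem map_sub_self_mem_of_forall_coe [Finite σ] [IsNoetherianRing R] [IsLocalRing R]
    {G : Type*} [FunLike G (MvPowerSeries σ R) (MvPowerSeries σ R)]
    [AddMonoidHomClass G (MvPowerSeries σ R) (MvPowerSeries σ R)] {I : Ideal (MvPowerSeries σ R)}
    (ĝ : G) (hcont : ∀ k : ℕ, ∀ F ∈ idealOfVars σ R ^ k, ĝ F ∈ idealOfVars σ R ^ k)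
    (hpoly : ∀ f : MvPolynomial σ R, ĝ f - f ∈ I) (H : MvPowerSeries σ R) : ĝ H - H ∈ I := by
  refine Ideal.mem_of_forall_mem_sup_pow idealOfVars_ne_top fun k => ?_
  set p := truncTotal k H
  have hHp : H - p ∈ idealOfVars σ R ^ k :=
    mem_pow_idealOfVars_of_le_order (nat_le_order fun d hd => by
      rw [map_sub, MvPolynomial.coeff_coe, coeff_truncTotal _ hd, sub_self])
  have hsplit : ĝ H - H = (ĝ p - p) + (ĝ (H - p) - (H - p)) := by rw [map_sub]; abel
  rw [hsplit]
  exact Submodule.add_mem_sup (hpoly p) (Submodule.sub_mem _ (hcont k _ hHp) hHp)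

theorem coeff_single_one_mul_of_constantCoeff_eq_zero {β : MvPowerSeries σ R}
    (hβ : constantCoeff β = 0) (w : MvPowerSeries σ R) (j : σ) :
    coeff (Finsupp.single j 1) (β * w) = coeff (Finsupp.single j 1) β * constantCoeff w := by
  classical
  rw [coeff_mul, Finsupp.antidiagonal_single, Finset.sum_map,
    show Finset.HasAntidiagonal.antidiagonal (1 : ℕ) = {(0, 1), (1, 0)} from rfl,
    Finset.sum_insert (by decide), Finset.sum_singleton]
  simp [hβ]

theorem exists_coeff_single_one_eq_mul_of_mem_span_singleton {ι : Type*}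
    {β : MvPowerSeries σ R} (hβ : constantCoeff β = 0) {F : ι → MvPowerSeries σ R}
    (hF : ∀ i, F i ∈ Ideal.span {β}) :
    ∃ c : ι → R, ∀ i j,
      coeff (Finsupp.single j 1) (F i) = c i * coeff (Finsupp.single j 1) β := by
  choose w hw using fun i => Ideal.mem_span_singleton'.mp (hF i)
  refine ⟨fun i => constantCoeff (w i), fun i j => ?_⟩
  rw [← hw, mul_comm, coeff_single_one_mul_of_constantCoeff_eq_zero hβ, mul_comm]

theorem constantCoeff_map_eq_zero {K F : Type*} [Field K]
    [EquivLike F (MvPowerSeries σ K) (MvPowerSeries σ K)]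
    [MulEquivClass F (MvPowerSeries σ K) (MvPowerSeries σ K)] (φ : F)
    {a : MvPowerSeries σ K} (ha : constantCoeff a = 0) : constantCoeff (φ a) = 0 := by
  by_contra hφa
  have : IsUnit a := (isUnit_map_iff φ a).mp (isUnit_iff_constantCoeff.mpr (Ne.isUnit hφa))
  simp [isUnit_iff_constantCoeff, ha] at this

end MvPowerSeries

section LinearAlgebra

variable {K : Type*} [Field K] {n : ℕ}

theorem coeff_single_one_polyAct_X_sub_X (g : GL (Fin n) K) (i j : Fin n) :
    MvPowerSeries.coeff (Finsupp.single j 1)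
        ((polyAct g (X i) : MvPowerSeries (Fin n) K) - MvPowerSeries.X i) =
      ((g⁻¹ : GL (Fin n) K) - 1 : Matrix (Fin n) (Fin n) K) i j := by
  classical
  simp [polyAct, coeff_sum, coeff_X, MvPowerSeries.coeff_X, Finsupp.single_left_inj, one_apply,
    eq_comm]

theorem fixedDim_inv (g : GL (Fin n) K) :
    fixedDim ((g⁻¹ : GL (Fin n) K) : Matrix (Fin n) (Fin n) K) =
      fixedDim (g : Matrix (Fin n) (Fin n) K) := by
  set A : Matrix (Fin n) (Fin n) K := ↑g
  set B : Matrix (Fin n) (Fin n) K := ↑g⁻¹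
  have hfactor : toLin' (B - 1) = -(toLin' B ∘ₗ toLin' (A - 1)) := by
    rw [← toLin'_mul, ← map_neg, mul_sub, mul_one, neg_sub, show B * A = 1 from g.inv_mul]
  have hinj : LinearMap.ker (toLin' B) = ⊥ :=
    LinearMap.ker_eq_bot_of_inverse (g := toLin' A)
      (by rw [← toLin'_mul, show A * B = 1 from g.mul_inv, toLin'_one])
  rw [fixedDim, fixedDim, hfactor, LinearMap.ker_neg, LinearMap.ker_comp_of_ker_eq_bot _ hinj]

theorem le_fixedDim_of_sub_one_eq_vecMulVec {A : Matrix (Fin n) (Fin n) K} {c b : Fin n → K}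
    (h : A - 1 = vecMulVec c b) : n - 1 ≤ fixedDim A := by
  have hrank : (A - 1).rank ≤ 1 := h ▸ rank_vecMulVec_le c b
  rw [Matrix.rank, ← toLin'_apply'] at hrank
  have hsum := LinearMap.finrank_range_add_finrank_ker (toLin' (A - 1))
  rw [Module.finrank_fintype_fun_eq_card, Fintype.card_fin] at hsum
  rw [fixedDim]
  omega

end LinearAlgebra

theorem linearized_is_pseudoreflection_general {K : Type*} [Field K] {n : ℕ}
    (g : MvPolynomial (Fin n) K ≃ₐ[K] MvPolynomial (Fin n) K)
    (g' : GL (Fin n) K)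
    (ghat ghat' : MvPowerSeries (Fin n) K ≃ₐ[K] MvPowerSeries (Fin n) K)
    (hext : ∀ f : MvPolynomial (Fin n) K,
      ghat (f : MvPowerSeries (Fin n) K) = ((g f : MvPolynomial (Fin n) K) : MvPowerSeries (Fin n) K))
    (hcont : ∀ k : ℕ,
      ∀ F ∈ (Ideal.span (Set.range (MvPowerSeries.X : Fin n → MvPowerSeries (Fin n) K))) ^ k,
      ghat F ∈ (Ideal.span (Set.range (MvPowerSeries.X : Fin n → MvPowerSeries (Fin n) K))) ^ k)
    (hext' : ∀ f : MvPolynomial (Fin n) K,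
      ghat' (f : MvPowerSeries (Fin n) K) =
        ((polyAct g' f : MvPolynomial (Fin n) K) : MvPowerSeries (Fin n) K))
    (φ : MvPowerSeries (Fin n) K ≃ₐ[K] MvPowerSeries (Fin n) K)
    (hφ : ∀ F : MvPowerSeries (Fin n) K, φ (ghat F) = ghat' (φ F))
    (α : MvPolynomial (Fin n) K)
    (hα : α ∈ Ideal.span (Set.range (X : Fin n → MvPolynomial (Fin n) K)))
    (h : ∀ f : MvPolynomial (Fin n) K, g f - f ∈ Ideal.span {α}) :
    n - 1 ≤ fixedDim ((g' : Matrix (Fin n) (Fin n) K)) := by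
  have hα_const : MvPowerSeries.constantCoeff (α : MvPowerSeries (Fin n) K) = 0 := by
    rw [← MvPowerSeries.coeff_zero_eq_constantCoeff_apply, MvPolynomial.coeff_coe]
    exact (mem_pow_idealOfVars_iff' 1 α).mp (by rwa [pow_one]) 0 (by simp)
  have hghat : ∀ H, ghat H - H ∈ Ideal.span {(α : MvPowerSeries (Fin n) K)} := by
    refine MvPowerSeries.map_sub_self_mem_of_forall_coe ghat hcont fun f => ?_
    have := Ideal.mem_map_of_mem MvPolynomial.coeToMvPowerSeries.ringHom (h f)
    rw [Ideal.map_span, Set.image_singleton, map_sub] at this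
    simpa [hext] using this
  have hghat' : ∀ i, ((polyAct g' (X i) : MvPolynomial (Fin n) K) : MvPowerSeries (Fin n) K) -
      MvPowerSeries.X i ∈ Ideal.span {φ α} := by
    intro i
    have hX : ghat' (MvPowerSeries.X i) = polyAct g' (X i) := by rw [← coe_X, hext']
    simpa [Ideal.map_span, hφ, hX] using
      Ideal.mem_map_of_mem φ (hghat (φ.symm (MvPowerSeries.X i)))
  obtain ⟨c, hc⟩ := MvPowerSeries.exists_coeff_single_one_eq_mul_of_mem_span_singleton
    (MvPowerSeries.constantCoeff_map_eq_zero φ hα_const) hghat'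
  have hmat : ((g'⁻¹ : GL (Fin n) K) : Matrix (Fin n) (Fin n) K) - 1 =
      vecMulVec c fun j => MvPowerSeries.coeff (Finsupp.single j 1) (φ α) := by
    ext i j
    rw [vecMulVec_apply, ← hc, coeff_single_one_polyAct_X_sub_X]
  rw [← fixedDim_inv]
  exact le_fixedDim_of_sub_one_eq_vecMulVec hmat

/-- Suppose a local algebra automorphism `g` of `K[x₁,…,xₙ]` and a linear
`g' ∈ GLₙ(K)` induce equivalent actions on the completed power series rings (via an
isomorphism `φ` with `φ ∘ ĝ = ĝ' ∘ φ`, where `ĝ, ĝ'` are the induced automorphisms,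
i.e. the continuous extensions).  If `g·f - f ∈ (α)` for some irreducible `α` in the
maximal ideal and all polynomials `f`, then `g'` is a pseudoreflection or the identity. -/
theorem linearized_is_pseudoreflection {K : Type*} [Field K] [IsAlgClosed K] {n : ℕ}
    (hn : 1 ≤ n)
    (g : MvPolynomial (Fin n) K ≃ₐ[K] MvPolynomial (Fin n) K)
    (hgm : ∀ f ∈ Ideal.span (Set.range (X : Fin n → MvPolynomial (Fin n) K)),
      g f ∈ Ideal.span (Set.range (X : Fin n → MvPolynomial (Fin n) K)))
    (g' : GL (Fin n) K)
    (ghat ghat' : MvPowerSeries (Fin n) K ≃ₐ[K] MvPowerSeries (Fin n) K)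
    (hext : ∀ f : MvPolynomial (Fin n) K,
      ghat (f : MvPowerSeries (Fin n) K) = ((g f : MvPolynomial (Fin n) K) : MvPowerSeries (Fin n) K))
    (hcont : ∀ k : ℕ,
      ∀ F ∈ (Ideal.span (Set.range (MvPowerSeries.X : Fin n → MvPowerSeries (Fin n) K))) ^ k,
      ghat F ∈ (Ideal.span (Set.range (MvPowerSeries.X : Fin n → MvPowerSeries (Fin n) K))) ^ k)
    (hext' : ∀ f : MvPolynomial (Fin n) K,
      ghat' (f : MvPowerSeries (Fin n) K) =
        ((polyAct g' f : MvPolynomial (Fin n) K) : MvPowerSeries (Fin n) K))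
    (hcont' : ∀ k : ℕ,
      ∀ F ∈ (Ideal.span (Set.range (MvPowerSeries.X : Fin n → MvPowerSeries (Fin n) K))) ^ k,
      ghat' F ∈ (Ideal.span (Set.range (MvPowerSeries.X : Fin n → MvPowerSeries (Fin n) K))) ^ k)
    (φ : MvPowerSeries (Fin n) K ≃ₐ[K] MvPowerSeries (Fin n) K)
    (hφ : ∀ F : MvPowerSeries (Fin n) K, φ (ghat F) = ghat' (φ F))
    (α : MvPolynomial (Fin n) K) (hirr : Irreducible α)
    (hα : α ∈ Ideal.span (Set.range (X : Fin n → MvPolynomial (Fin n) K)))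
    (h : ∀ f : MvPolynomial (Fin n) K, g f - f ∈ Ideal.span {α}) :
    n - 1 ≤ fixedDim ((g' : Matrix (Fin n) (Fin n) K)) :=
  linearized_is_pseudoreflection_general g g' ghat ghat' hext hcont hext' φ hφ α hα h
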